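/- Let f : ℝ^m → ℝ be a C³ function and let {x_n} be a sequence generated by New Q-Newton's method Backtracking G with parameter 0 < τ < 1. If f has at most countably many critical points, then either lim_{n→∞} ‖x_n‖ = ∞ or {x_n} converges to a critical point of f. Moreover, if in addition f has compact sublevels, then {x_n} converges to a critical point of f. -/

import Mathlib

open scoped RealInnerProductSpace
open Filter Topology

set_option maxHeartbeats 1000000
noncomputable section

/-- ℝ^m with the Euclidean inner product and norm. -/
abbrev Euc (m : ℕ) := EuclideanSpace ℝ (Fin m)

/-- `minsp A = min_{‖e‖=1} ‖A e‖`. -/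
def minsp {m : ℕ} (A : Euc m →L[ℝ] Euc m) : ℝ :=
  sInf {r : ℝ | ∃ e : Euc m, ‖e‖ = 1 ∧ r = ‖A e‖}

/-- `κ = (1/2) · min_{i≠j} |δ_i − δ_j|`. -/
def kappa {m : ℕ} (δ : Fin (m + 1) → ℝ) : ℝ :=
  (1 / 2) * sInf {r : ℝ | ∃ i j : Fin (m + 1), i ≠ j ∧ r = |δ i - δ j|}

/-- The Hessian `∇²f(x)` of `f` at `x`, as a continuous linear map
(the derivative of the gradient). -/
def hessOp {m : ℕ} (f : Euc m → ℝ) (x : Euc m) : Euc m →L[ℝ] Euc m :=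
  fderiv ℝ (gradient f) x

/-- `A(x) = ∇²f(x) + δ_j ‖∇f(x)‖^τ · Id`. -/
def Aop {m : ℕ} (f : Euc m → ℝ) (δj τ : ℝ) (x : Euc m) : Euc m →L[ℝ] Euc m :=
  hessOp f x + (δj * ‖gradient f x‖ ^ τ) • ContinuousLinearMap.id ℝ (Euc m)

/-- The index `j` is acceptable at `x`: `minsp(∇²f(x) + δ_j‖∇f(x)‖^τ Id) ≥ κ‖∇f(x)‖^τ`. -/
def goodIdx {m : ℕ} (δ : Fin (m + 1) → ℝ) (τ : ℝ) (f : Euc m → ℝ) (x : Euc m)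
    (j : Fin (m + 1)) : Prop :=
  kappa δ * ‖gradient f x‖ ^ τ ≤ minsp (Aop f (δ j) τ x)

/-- The step direction `w = Σᵢ (⟨∇f(x), eᵢ⟩/‖A eᵢ‖) eᵢ`. -/
def dirW {m : ℕ} (f : Euc m → ℝ) (A : Euc m →L[ℝ] Euc m) (e : Fin m → Euc m) (x : Euc m) :
    Euc m :=
  ∑ i : Fin m, (⟪gradient f x, e i⟫ / ‖A (e i)‖) • e i

/-- The normalised step direction `ŵ = w / max{1, ‖w‖}`. -/
def hatW {m : ℕ} (f : Euc m → ℝ) (A : Euc m →L[ℝ] Euc m) (e : Fin m → Euc m) (x : Euc m) :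
    Euc m :=
  (max 1 ‖dirW f A e x‖)⁻¹ • dirW f A e x

/-- Armijo's condition: `f(x − γ v) − f(x) ≤ −(1/3) γ ⟨v, ∇f(x)⟩`. -/
def armijo {m : ℕ} (f : Euc m → ℝ) (x v : Euc m) (γ : ℝ) : Prop :=
  f (x - γ • v) - f x ≤ -(γ * ⟪v, gradient f x⟫) / 3

/-- One step of New Q-Newton's method Backtracking G, with orthonormal basis `e`,
selected index `j` (the least acceptable index), current point `x` and next point `x'`. -/
def IsQNGStep {m : ℕ} (δ : Fin (m + 1) → ℝ) (τ γ0 : ℝ) (f : Euc m → ℝ)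
    (e : Fin m → Euc m) (j : Fin (m + 1)) (x x' : Euc m) : Prop :=
  (gradient f x = 0 → x' = x) ∧
  (gradient f x ≠ 0 →
    goodIdx δ τ f x j ∧ (∀ j' : Fin (m + 1), j' < j → ¬ goodIdx δ τ f x j') ∧
    ∃ p : ℕ,
      armijo f x (hatW f (Aop f (δ j) τ x) e x) (γ0 * (1 / 3) ^ p) ∧
      (∀ q : ℕ, q < p → ¬ armijo f x (hatW f (Aop f (δ j) τ x) e x) (γ0 * (1 / 3) ^ q)) ∧
      x' = x - (γ0 * (1 / 3) ^ p) • hatW f (Aop f (δ j) τ x) e x)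

/-- `x : ℕ → ℝ^m` is generated by New Q-Newton's method Backtracking G, with
orthonormal bases `e n` and selected indices `j n` at step `n`. -/
def IsQNGSeq {m : ℕ} (δ : Fin (m + 1) → ℝ) (τ γ0 : ℝ) (f : Euc m → ℝ)
    (e : ℕ → Fin m → Euc m) (j : ℕ → Fin (m + 1)) (x : ℕ → Euc m) : Prop :=
  ∀ n : ℕ, Orthonormal ℝ (e n) ∧ IsQNGStep δ τ γ0 f (e n) (j n) (x n) (x (n + 1))


section Aux


lemma rpow_le_one_add {G t : ℝ} (hG : 0 ≤ G) (h0 : 0 ≤ t) (h1 : t ≤ 1) : G ^ t ≤ 1 + G := by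
  rcases le_or_gt G 1 with h | h
  · calc G ^ t ≤ 1 := Real.rpow_le_one hG h h0
    _ ≤ 1 + G := by linarith
  · calc G ^ t ≤ G ^ (1:ℝ) := Real.rpow_le_rpow_of_exponent_le h.le h1
    _ = G := Real.rpow_one G
    _ ≤ 1 + G := by linarith

lemma div_rpow_eq {G t : ℝ} (hG : 0 < G) : G / G ^ t = G ^ (1 - t) := by
  rw [Real.rpow_sub hG, Real.rpow_one]

lemma rpow_inv_ge {G a s : ℝ} (hG : 0 ≤ G) (ha : 0 < a) (hs : 0 < s) (h : a ≤ G ^ s) :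
    a ^ s⁻¹ ≤ G := by
  have h2 : a ^ s⁻¹ ≤ (G ^ s) ^ s⁻¹ := Real.rpow_le_rpow ha.le h (by positivity)
  have h3 : (G ^ s) ^ s⁻¹ = G := by
    rw [← Real.rpow_mul hG, mul_inv_cancel₀ hs.ne', Real.rpow_one]
  linarith [h3 ▸ h2]

lemma minsp_le {m : ℕ} (A : Euc m →L[ℝ] Euc m) (u : Euc m) (hu : ‖u‖ = 1) :
    minsp A ≤ ‖A u‖ := by
  apply csInf_le
  · exact ⟨0, fun r ⟨e, he, hr⟩ => hr ▸ norm_nonneg _⟩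
  · exact ⟨u, hu, rfl⟩

lemma kappa_pos {m : ℕ} (hm : 1 ≤ m) {δ : Fin (m + 1) → ℝ} (hδ : Function.Injective δ) :
    0 < kappa δ := by
  have h2 : (1:ℕ) < m + 1 := by omega
  set S : Set ℝ := {r : ℝ | ∃ i j : Fin (m + 1), i ≠ j ∧ r = |δ i - δ j|} with hS
  have hfin : S.Finite := by
    have : S ⊆ (fun p : Fin (m+1) × Fin (m+1) => |δ p.1 - δ p.2|) '' Set.univ := by
      rintro r ⟨i, j, hij, rfl⟩; exact ⟨(i, j), trivial, rfl⟩
    exact Set.Finite.subset (Set.finite_univ.image _) this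
  have hne : S.Nonempty := by
    refine ⟨|δ ⟨0, by omega⟩ - δ ⟨1, by omega⟩|, ⟨0, by omega⟩, ⟨1, by omega⟩, ?_, rfl⟩
    intro h; simpa using congrArg Fin.val h
  have hmem : sInf S ∈ S := hne.csInf_mem hfin
  obtain ⟨i, j, hij, hval⟩ := hmem
  have : 0 < |δ i - δ j| := by
    rw [abs_pos, sub_ne_zero]
    exact fun h => hij (hδ h)
  rw [kappa]
  nlinarith [hval ▸ this]

variable {m : ℕ} {f : Euc m → ℝ}


lemma grad_inner (x v : Euc m) : ⟪gradient f x, v⟫ = fderiv ℝ f x v := by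
  rw [gradient]
  exact InnerProductSpace.toDual_symm_apply

lemma contDiff_grad (hf : ContDiff ℝ 3 f) : ContDiff ℝ 2 (gradient f) := by
  have h1 : ContDiff ℝ 2 (fderiv ℝ f) := hf.fderiv_right (by norm_num)
  have h2 : gradient f = fun y => (InnerProductSpace.toDual ℝ (Euc m)).symm (fderiv ℝ f y) := rfl
  rw [h2]
  exact (InnerProductSpace.toDual ℝ (Euc m)).symm.contDiff.comp h1

lemma cont_grad (hf : ContDiff ℝ 3 f) : Continuous (gradient f) :=
  (contDiff_grad hf).continuous

lemma diff_grad (hf : ContDiff ℝ 3 f) (y : Euc m) : DifferentiableAt ℝ (gradient f) y :=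
  (contDiff_grad hf).differentiable (by norm_num) y

lemma cont_hess (hf : ContDiff ℝ 3 f) : Continuous (hessOp f) := by
  have h1 : ContDiff ℝ 1 (fderiv ℝ (gradient f)) :=
    (contDiff_grad hf).fderiv_right (by norm_num)
  exact h1.continuous

lemma exists_mvt (hf : ContDiff ℝ 3 f) (x v : Euc m) {γ : ℝ} (hγ : 0 < γ) :
    ∃ t ∈ Set.Ioo (0:ℝ) γ, f (x - γ • v) - f x = γ * (-⟪v, gradient f (x - t • v)⟫) := by
  have hdf : ∀ y, DifferentiableAt ℝ f y := fun y => hf.differentiable (by norm_num) y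
  set φ : ℝ → ℝ := fun t => f (x - t • v) with hφ
  have hder : ∀ t : ℝ, HasDerivAt φ (-⟪v, gradient f (x - t • v)⟫) t := by
    intro t
    have hψ : HasDerivAt (fun s : ℝ => x - s • v) (-v) t := by
      simpa using ((hasDerivAt_id t).smul_const v).const_sub x
    have := (hdf (x - t • v)).hasFDerivAt.comp_hasDerivAt t hψ
    refine this.congr_deriv ?_
    rw [← grad_inner (x - t • v) (-v), real_inner_comm]
    simp [inner_neg_left]
  obtain ⟨c, hc, hceq⟩ := exists_hasDerivAt_eq_slope φ (fun t => -⟪v, gradient f (x - t • v)⟫)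
    hγ (fun t _ => (hder t).continuousAt.continuousWithinAt) (fun t _ => hder t)
  refine ⟨c, hc, ?_⟩
  have : φ γ - φ 0 = γ * (-⟪v, gradient f (x - c • v)⟫) := by
    field_simp at hceq ⊢
    rw [sub_zero, eq_div_iff hγ.ne'] at hceq; linarith [hceq]
  simpa [hφ] using this

variable {A : Euc m →L[ℝ] Euc m} {e : Fin m → Euc m} {x : Euc m}
 {A : Euc m →L[ℝ] Euc m} {e : Fin m → Euc m} {x : Euc m}

lemma inner_w_eq :
    ⟪gradient f x, dirW f A e x⟫ = ∑ i : Fin m, ⟪gradient f x, e i⟫ ^ 2 / ‖A (e i)‖ := by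
  rw [dirW, inner_sum]
  congr 1; ext i
  rw [real_inner_smul_right]; ring

lemma norm_hatW_le_one : ‖hatW f A e x‖ ≤ 1 := by
  rw [hatW, norm_smul]
  have h1 : (0:ℝ) < max 1 ‖dirW f A e x‖ := lt_of_lt_of_le one_pos (le_max_left _ _)
  rw [norm_inv, Real.norm_eq_abs, abs_of_pos h1]
  rw [inv_mul_le_iff₀ h1, mul_one]
  exact le_max_right _ _

lemma inner_hatw_eq :
    ⟪hatW f A e x, gradient f x⟫
      = (max 1 ‖dirW f A e x‖)⁻¹ * ⟪gradient f x, dirW f A e x⟫ := by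
  rw [hatW, real_inner_smul_left, real_inner_comm]

lemma inner_hatw_nonneg (hA : ∀ i, 0 ≤ ‖A (e i)‖) : 0 ≤ ⟪hatW f A e x, gradient f x⟫ := by
  rw [inner_hatw_eq, inner_w_eq]
  apply mul_nonneg
  · exact inv_nonneg.2 (le_trans zero_le_one (le_max_left _ _))
  · exact Finset.sum_nonneg fun i _ => div_nonneg (sq_nonneg _) (hA i)

lemma norm_w_sq (hon : Orthonormal ℝ e) :
    ‖dirW f A e x‖ ^ 2 = ∑ i : Fin m, (⟪gradient f x, e i⟫ / ‖A (e i)‖) ^ 2 := by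
  rw [← real_inner_self_eq_norm_sq, dirW, inner_sum]
  congr 1; ext i
  rw [real_inner_smul_right, hon.inner_left_fintype]
  simp only [starRingEnd_apply, star_trivial]
  ring

lemma bessel (g : Euc m) (hon : Orthonormal ℝ e) :
    ∑ i : Fin m, ⟪g, e i⟫ ^ 2 ≤ ‖g‖ ^ 2 := by
  have h : ∀ i : Fin m, ⟪g, e i⟫ ^ 2 = ‖⟪e i, g⟫‖ ^ 2 := fun i => by
    rw [real_inner_comm, Real.norm_eq_abs, sq_abs]
  rw [Finset.sum_congr rfl fun i _ => h i]
  exact Orthonormal.sum_inner_products_le g hon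

lemma norm_w_le {c : ℝ} (hon : Orthonormal ℝ e) (hc : 0 < c)
    (hA : ∀ i, c ≤ ‖A (e i)‖) :
    ‖dirW f A e x‖ ≤ ‖gradient f x‖ / c := by
  have key : ‖dirW f A e x‖ ^ 2 ≤ (‖gradient f x‖ / c) ^ 2 := by
    rw [norm_w_sq hon]
    have h1 : ∀ i : Fin m, (⟪gradient f x, e i⟫ / ‖A (e i)‖) ^ 2
        ≤ ⟪gradient f x, e i⟫ ^ 2 / c ^ 2 := by
      intro i
      rw [div_pow]
      apply div_le_div_of_nonneg_left (sq_nonneg _) (by positivity)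
      exact pow_le_pow_left₀ hc.le (hA i) 2
    calc _ ≤ ∑ i : Fin m, ⟪gradient f x, e i⟫ ^ 2 / c ^ 2 := Finset.sum_le_sum fun i _ => h1 i
    _ = (∑ i : Fin m, ⟪gradient f x, e i⟫ ^ 2) / c ^ 2 := by rw [Finset.sum_div]
    _ ≤ ‖gradient f x‖ ^ 2 / c ^ 2 := by
        exact div_le_div_of_nonneg_right (bessel (gradient f x) hon) (by positivity)
    _ = (‖gradient f x‖ / c) ^ 2 := by rw [div_pow]
  have h2 : (0:ℝ) ≤ ‖gradient f x‖ / c := by positivity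
  nlinarith [norm_nonneg (dirW f A e x)]

lemma parseval (g : Euc m) (hon : Orthonormal ℝ e) :
    ∑ i : Fin m, ⟪g, e i⟫ ^ 2 = ‖g‖ ^ 2 := by
  have hsp : ⊤ ≤ Submodule.span ℝ (Set.range e) := by
    refine ge_of_eq (hon.linearIndependent.span_eq_top_of_card_eq_finrank' ?_)
    simp [finrank_euclideanSpace_fin]
  set B : OrthonormalBasis (Fin m) ℝ (Euc m) := OrthonormalBasis.mk hon hsp with hB
  have hBe : ∀ i, B i = e i := fun i => by rw [hB, OrthonormalBasis.coe_mk]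
  have := B.sum_inner_mul_inner g g
  have h2 : ∀ i : Fin m, ⟪g, B i⟫ * ⟪B i, g⟫ = ⟪g, e i⟫ ^ 2 := fun i => by
    rw [hBe, real_inner_comm (e i) g]; ring
  rw [Finset.sum_congr rfl fun i _ => h2 i] at this
  rw [this, real_inner_self_eq_norm_sq]


lemma norm_hatW_le_norm_w : ‖hatW f A e x‖ ≤ ‖dirW f A e x‖ := by
  rw [hatW, norm_smul, norm_inv, Real.norm_eq_abs,
    abs_of_pos (lt_of_lt_of_le one_pos (le_max_left _ ‖dirW f A e x‖))]
  have h1 : (1:ℝ) ≤ max 1 ‖dirW f A e x‖ := le_max_left _ _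
  calc (max 1 ‖dirW f A e x‖)⁻¹ * ‖dirW f A e x‖ ≤ 1 * ‖dirW f A e x‖ := by
        apply mul_le_mul_of_nonneg_right _ (norm_nonneg _)
        exact inv_le_one_of_one_le₀ h1
  _ = ‖dirW f A e x‖ := one_mul _

lemma inner_hatw_lb {C c2 : ℝ} (hon : Orthonormal ℝ e)
    (hpos : ∀ i, 0 < ‖A (e i)‖) (hup : ∀ i, ‖A (e i)‖ ≤ C) (hC : 0 < C)
    (hwup : ‖dirW f A e x‖ ≤ c2) :
    ‖gradient f x‖ ^ 2 / C * (max 1 c2)⁻¹ ≤ ⟪hatW f A e x, gradient f x⟫ := by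
  have hw : ‖gradient f x‖ ^ 2 / C ≤ ⟪gradient f x, dirW f A e x⟫ := by
    rw [inner_w_eq, ← parseval (gradient f x) hon, Finset.sum_div]
    refine Finset.sum_le_sum fun i _ => ?_
    exact div_le_div_of_nonneg_left (sq_nonneg _) (hpos i) (hup i)
  rw [inner_hatw_eq]
  have hmax : (0:ℝ) < max 1 c2 := lt_of_lt_of_le one_pos (le_max_left _ _)
  have hmax2 : (0:ℝ) < max 1 ‖dirW f A e x‖ := lt_of_lt_of_le one_pos (le_max_left _ _)
  have hmm : (max 1 c2)⁻¹ ≤ (max 1 ‖dirW f A e x‖)⁻¹ := by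
    apply inv_anti₀ hmax2
    exact max_le_max le_rfl hwup
  calc ‖gradient f x‖ ^ 2 / C * (max 1 c2)⁻¹
      ≤ ⟪gradient f x, dirW f A e x⟫ * (max 1 ‖dirW f A e x‖)⁻¹ := by
        apply mul_le_mul hw hmm (by positivity)
        · exact le_trans (by positivity) hw
  _ = (max 1 ‖dirW f A e x‖)⁻¹ * ⟪gradient f x, dirW f A e x⟫ := mul_comm _ _

lemma Aop_norm_le {d t : ℝ} (u : Euc m) (hu : ‖u‖ = 1) :
    ‖Aop f d t x u‖ ≤ ‖hessOp f x‖ + |d| * ‖gradient f x‖ ^ t := by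
  have h1 : Aop f d t x u = hessOp f x u + (d * ‖gradient f x‖ ^ t) • u := by
    simp [Aop]
  rw [h1]
  calc ‖hessOp f x u + (d * ‖gradient f x‖ ^ t) • u‖
      ≤ ‖hessOp f x u‖ + ‖(d * ‖gradient f x‖ ^ t) • u‖ := norm_add_le _ _
  _ ≤ ‖hessOp f x‖ + |d| * ‖gradient f x‖ ^ t := by
      rw [norm_smul, Real.norm_eq_abs, abs_mul, hu, mul_one,
        abs_of_nonneg (Real.rpow_nonneg (norm_nonneg _) t)]
      have := (hessOp f x).le_opNorm u
      rw [hu, mul_one] at this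
      linarith

lemma good_lb {δ : Fin (m+1) → ℝ} {τ : ℝ} {jj : Fin (m+1)}
    (hgood : goodIdx δ τ f x jj) (u : Euc m) (hu : ‖u‖ = 1) :
    kappa δ * ‖gradient f x‖ ^ τ ≤ ‖Aop f (δ jj) τ x u‖ :=
  le_trans hgood (minsp_le _ u hu)

lemma kgt_pos {δ : Fin (m+1) → ℝ} {τ : ℝ} (hm : 1 ≤ m) (hδ : Function.Injective δ)
    (hg : gradient f x ≠ 0) : 0 < kappa δ * ‖gradient f x‖ ^ τ :=
  mul_pos (kappa_pos hm hδ) (Real.rpow_pos_of_pos (norm_pos_iff.2 hg) τ)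

lemma norm_w_le' {δ : Fin (m+1) → ℝ} {τ : ℝ} {jj : Fin (m+1)} (hm : 1 ≤ m)
    (hδ : Function.Injective δ) (hon : Orthonormal ℝ e)
    (hgood : goodIdx δ τ f x jj) (hg : gradient f x ≠ 0) :
    ‖dirW f (Aop f (δ jj) τ x) e x‖ ≤ ‖gradient f x‖ ^ (1 - τ) / kappa δ := by
  have hG : 0 < ‖gradient f x‖ := norm_pos_iff.2 hg
  have h1 : ‖dirW f (Aop f (δ jj) τ x) e x‖ ≤ ‖gradient f x‖ / (kappa δ * ‖gradient f x‖ ^ τ) :=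
    norm_w_le hon (kgt_pos hm hδ hg) (fun i => good_lb hgood (e i) (hon.1 i))
  calc ‖dirW f (Aop f (δ jj) τ x) e x‖
      ≤ ‖gradient f x‖ / (kappa δ * ‖gradient f x‖ ^ τ) := h1
  _ = ‖gradient f x‖ ^ (1 - τ) / kappa δ := by
      rw [← div_rpow_eq hG]
      field_simp

lemma step_spec {δ : Fin (m+1) → ℝ} {τ γ0 : ℝ} {e : Fin m → Euc m} {jj : Fin (m+1)}
    {x x' : Euc m} (hγ0 : 0 < γ0) (hst : IsQNGStep δ τ γ0 f e jj x x')
    (hg : gradient f x ≠ 0) :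
    ∃ γ : ℝ, 0 < γ ∧ γ ≤ γ0 ∧ x' = x - γ • hatW f (Aop f (δ jj) τ x) e x ∧
      armijo f x (hatW f (Aop f (δ jj) τ x) e x) γ ∧
      (γ = γ0 ∨ (3 * γ ≤ γ0 ∧ ¬ armijo f x (hatW f (Aop f (δ jj) τ x) e x) (3 * γ))) := by
  obtain ⟨hgood, hmin, p, harm, hpm, hx'⟩ := hst.2 hg
  have hb : ∀ q : ℕ, γ0 * (1/3)^q ≤ γ0 := fun q =>
    mul_le_of_le_one_right hγ0.le (pow_le_one₀ (by norm_num) (by norm_num))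
  refine ⟨γ0 * (1/3)^p, by positivity, hb p, hx', harm, ?_⟩
  · rcases Nat.eq_zero_or_pos p with hp | hp
    · left; simp [hp]
    · right
      obtain ⟨q, rfl⟩ : ∃ q, p = q + 1 := ⟨p - 1, by omega⟩
      have h3 : 3 * (γ0 * (1/3)^(q+1)) = γ0 * (1/3)^q := by
        rw [pow_succ]; ring
      have h4 : q + 1 - 1 = q := by omega
      exact ⟨h3 ▸ hb q, h3 ▸ hpm q (by omega)⟩

lemma armijo_decrease {v : Euc m} {γ : ℝ} (h : armijo f x v γ) (hγ : 0 ≤ γ)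
    (hnn : 0 ≤ ⟪v, gradient f x⟫) : f (x - γ • v) ≤ f x := by
  rw [armijo] at h
  nlinarith


lemma cluster_critical {δ : Fin (m+1) → ℝ} {τ γ0 : ℝ} {e : ℕ → Fin m → Euc m}
    {j : ℕ → Fin (m+1)} {x : ℕ → Euc m}
    (hm : 1 ≤ m) (hδ : Function.Injective δ) (hτ : 0 < τ) (hτ1 : τ < 1)
    (hγ0 : 0 < γ0) (hγ1 : γ0 < 1) (hf : ContDiff ℝ 3 f)
    (hseq : IsQNGSeq δ τ γ0 f e j x) (hg : ∀ n, gradient f (x n) ≠ 0)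
    {z : Euc m} {φ : ℕ → ℕ} (hφ : StrictMono φ) (hlim : Tendsto (x ∘ φ) atTop (𝓝 z)) :
    gradient f z = 0 := by
  by_contra hgz
  have hκ : 0 < kappa δ := kappa_pos hm hδ
  have hG0 : 0 < ‖gradient f z‖ := norm_pos_iff.2 hgz
  have hstep := fun n => step_spec (f := f) hγ0 (hseq n).2 (hg n)
  choose γ hγpos hγle hxeq harm hor using hstep
  set W : ℕ → Euc m := fun n => hatW f (Aop f (δ (j n)) τ (x n)) (e n) (x n) with hWdef
  have hWn : ∀ n, 0 ≤ ⟪W n, gradient f (x n)⟫ := fun n =>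
    inner_hatw_nonneg (fun i => norm_nonneg _)
  have hW1 : ∀ n, ‖W n‖ ≤ 1 := fun n => norm_hatW_le_one
  have hfd : ∀ n, f (x (n+1)) + γ n * ⟪W n, gradient f (x n)⟫ / 3 ≤ f (x n) := by
    intro n
    have h1 := harm n
    rw [armijo] at h1
    rw [hxeq n]
    linarith
  have hfd' : ∀ n, f (x (n+1)) ≤ f (x n) := fun n => by
    nlinarith [hfd n, mul_nonneg (hγpos n).le (hWn n)]
  have hant : Antitone (fun n => f (x n)) := antitone_nat_of_succ_le hfd'
  have hfz : Tendsto (fun n => f (x n)) atTop (𝓝 (f z)) := by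
    have hsub : Tendsto (fun k => f (x (φ k))) atTop (𝓝 (f z)) :=
      (hf.continuous.tendsto z).comp hlim
    rcases tendsto_of_antitone hant with hbot | ⟨L, hL⟩
    · exfalso
      exact not_tendsto_atBot_of_tendsto_nhds hsub (hbot.comp hφ.tendsto_atTop)
    · have : L = f z := tendsto_nhds_unique (hL.comp hφ.tendsto_atTop) hsub
      rwa [this] at hL
  have hterm : Tendsto (fun n => γ n * ⟪W n, gradient f (x n)⟫) atTop (𝓝 0) := by
    have hd : Tendsto (fun n => 3 * (f (x n) - f (x (n+1)))) atTop (𝓝 0) := by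
      have h1 : Tendsto (fun n => f (x (n+1))) atTop (𝓝 (f z)) :=
        hfz.comp (tendsto_add_atTop_nat 1)
      have := (hfz.sub h1).const_mul (3:ℝ)
      simpa using this
    apply squeeze_zero (fun n => mul_nonneg (hγpos n).le (hWn n)) (fun n => ?_) hd
    linarith [hfd n]
  -- a ball where the gradient is large
  obtain ⟨r1, hr1pos, hr11, hr1⟩ : ∃ r1 : ℝ, 0 < r1 ∧ r1 ≤ 1 ∧
      ∀ y ∈ Metric.closedBall z r1, ‖gradient f z‖/2 ≤ ‖gradient f y‖ := by
    have hcont : Continuous fun y => ‖gradient f y‖ := (cont_grad hf).norm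
    have hopen : IsOpen {y : Euc m | ‖gradient f z‖/2 < ‖gradient f y‖} :=
      isOpen_lt continuous_const hcont
    have hzmem : z ∈ {y : Euc m | ‖gradient f z‖/2 < ‖gradient f y‖} := by
      simp only [Set.mem_setOf_eq]; linarith
    obtain ⟨ε, hε, hball⟩ := Metric.isOpen_iff.1 hopen z hzmem
    refine ⟨min (ε/2) 1, by positivity, min_le_right _ _, fun y hy => ?_⟩
    have : y ∈ Metric.ball z ε := by
      rw [Metric.mem_closedBall] at hy
      rw [Metric.mem_ball]
      calc dist y z ≤ min (ε/2) 1 := hy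
      _ ≤ ε/2 := min_le_left _ _
      _ < ε := by linarith
    exact (hball this).le
  set B2 := Metric.closedBall z 2 with hB2def
  have hB2c : IsCompact B2 := isCompact_closedBall z 2
  obtain ⟨Mh0, hMh0⟩ := hB2c.exists_bound_of_continuousOn (cont_hess hf).continuousOn
  obtain ⟨Mg0, hMg0⟩ := hB2c.exists_bound_of_continuousOn (cont_grad hf).continuousOn
  set Mh := max Mh0 0 with hMhdef
  set Mg := max Mg0 0 with hMgdef
  have hMh : ∀ y ∈ B2, ‖hessOp f y‖ ≤ Mh := fun y hy => (hMh0 y hy).trans (le_max_left _ _)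
  have hMg : ∀ y ∈ B2, ‖gradient f y‖ ≤ Mg := fun y hy => (hMg0 y hy).trans (le_max_left _ _)
  have hMhnn : 0 ≤ Mh := le_max_right _ _
  have hMgnn : 0 ≤ Mg := le_max_right _ _
  set Δ : ℝ := ∑ i : Fin (m+1), |δ i| with hΔdef
  have hΔi : ∀ i, |δ i| ≤ Δ := fun i =>
    Finset.single_le_sum (fun i _ => abs_nonneg (δ i)) (Finset.mem_univ i)
  have hΔnn : 0 ≤ Δ := Finset.sum_nonneg fun i _ => abs_nonneg _
  set C1 : ℝ := Mh + Δ * (1 + Mg) + 1 with hC1def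
  have hC1pos : 0 < C1 := by positivity
  set c2 : ℝ := (1 + Mg) / kappa δ with hc2def
  have hc2nn : 0 ≤ c2 := by positivity
  set c3 : ℝ := (‖gradient f z‖/2)^2 / C1 * (max 1 c2)⁻¹ with hc3def
  have hmax2pos : (0:ℝ) < max 1 c2 := lt_of_lt_of_le one_pos (le_max_left _ _)
  have hc3pos : 0 < c3 := by positivity
  have hlip : ∀ a ∈ B2, ∀ b ∈ B2, ‖gradient f a - gradient f b‖ ≤ Mh * ‖a - b‖ := by
    intro a ha b hb
    exact (convex_closedBall z 2).norm_image_sub_le_of_norm_fderiv_le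
      (fun y _ => diff_grad hf y) (fun y hy => hMh y hy) hb ha
  have hsubB2 : Metric.closedBall z r1 ⊆ B2 :=
    Metric.closedBall_subset_closedBall (by linarith)
  -- lower bound for the inner product at points near z
  have key1 : ∀ n, x n ∈ Metric.closedBall z r1 → c3 ≤ ⟪W n, gradient f (x n)⟫ := by
    intro n hn
    have hgood : goodIdx δ τ f (x n) (j n) := ((hseq n).2.2 (hg n)).1
    have hon := (hseq n).1
    have hB : x n ∈ B2 := hsubB2 hn
    have hGub : ‖gradient f (x n)‖ ≤ Mg := hMg _ hB
    have hGlb : ‖gradient f z‖/2 ≤ ‖gradient f (x n)‖ := hr1 _ hn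
    have hup : ∀ i, ‖Aop f (δ (j n)) τ (x n) (e n i)‖ ≤ C1 := by
      intro i
      calc ‖Aop f (δ (j n)) τ (x n) (e n i)‖
          ≤ ‖hessOp f (x n)‖ + |δ (j n)| * ‖gradient f (x n)‖ ^ τ :=
            Aop_norm_le _ (hon.1 i)
      _ ≤ Mh + Δ * (1 + Mg) := by
          have h2 : ‖gradient f (x n)‖ ^ τ ≤ 1 + Mg :=
            (rpow_le_one_add (norm_nonneg _) hτ.le hτ1.le).trans (by linarith)
          have := mul_le_mul (hΔi (j n)) h2
            (Real.rpow_nonneg (norm_nonneg _) τ) hΔnn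
          linarith [hMh _ hB]
      _ ≤ C1 := by rw [hC1def]; linarith
    have hpos : ∀ i, 0 < ‖Aop f (δ (j n)) τ (x n) (e n i)‖ := fun i =>
      lt_of_lt_of_le (kgt_pos hm hδ (hg n)) (good_lb hgood _ (hon.1 i))
    have hwup : ‖dirW f (Aop f (δ (j n)) τ (x n)) (e n) (x n)‖ ≤ c2 := by
      refine (norm_w_le' hm hδ hon hgood (hg n)).trans ?_
      rw [hc2def]
      apply div_le_div_of_nonneg_right ?_ hκ.le
      exact (rpow_le_one_add (norm_nonneg _) (by linarith) (by linarith)).trans (by linarith)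
    have h3 := inner_hatw_lb hon hpos hup hC1pos hwup
    refine le_trans ?_ h3
    rw [hc3def]
    apply mul_le_mul_of_nonneg_right ?_ (by positivity)
    apply div_le_div_of_nonneg_right ?_ hC1pos.le
    exact pow_le_pow_left₀ (by positivity) hGlb 2
  have hev : ∀ᶠ k in atTop, x (φ k) ∈ Metric.closedBall z r1 := by
    have : Metric.closedBall z r1 ∈ 𝓝 z := Metric.closedBall_mem_nhds z hr1pos
    exact hlim this
  have hγφ : Tendsto (fun k => γ (φ k)) atTop (𝓝 0) := by
    have htφ : Tendsto (fun k => (1/c3) * (γ (φ k) * ⟪W (φ k), gradient f (x (φ k))⟫))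
        atTop (𝓝 0) := by
      have := (hterm.comp hφ.tendsto_atTop).const_mul (1/c3)
      simpa using this
    apply squeeze_zero' (Eventually.of_forall fun k => (hγpos (φ k)).le) ?_ htφ
    filter_upwards [hev] with k hk
    have h1 := key1 (φ k) hk
    have h2 := (hγpos (φ k)).le
    rw [one_div]
    calc γ (φ k) = c3⁻¹ * (γ (φ k) * c3) := by field_simp
    _ ≤ c3⁻¹ * (γ (φ k) * ⟪W (φ k), gradient f (x (φ k))⟫) := by
        have h3 : γ (φ k) * c3 ≤ γ (φ k) * ⟪W (φ k), gradient f (x (φ k))⟫ :=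
          mul_le_mul_of_nonneg_left h1 h2
        apply mul_le_mul_of_nonneg_left h3 (by positivity)
  -- derive the contradiction
  have hsmall : ∀ᶠ k in atTop, γ (φ k) < min γ0 (c3 * 2 / (9 * (Mh + 1))) := by
    apply hγφ.eventually_lt_const
    have : (0:ℝ) < c3 * 2 / (9 * (Mh + 1)) := by positivity
    exact lt_min hγ0 this
  obtain ⟨k, hk1, hk2⟩ := (hev.and hsmall).exists
  set n := φ k with hndef
  have hγlt : γ n < γ0 := lt_of_lt_of_le hk2 (min_le_left _ _)
  have hγc : γ n < c3 * 2 / (9 * (Mh + 1)) := lt_of_lt_of_le hk2 (min_le_right _ _)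
  rcases hor n with heq | ⟨h3le, hfail⟩
  · exact absurd heq (ne_of_lt hγlt)
  set γ' := 3 * γ n with hγ'def
  have hγ'pos : 0 < γ' := by rw [hγ'def]; linarith [hγpos n]
  have hγ'le : γ' ≤ γ0 := h3le
  obtain ⟨t, ht, heq⟩ := exists_mvt hf (x n) (W n) hγ'pos
  set ξ := x n - t • W n with hξdef
  have hxB : x n ∈ B2 := hsubB2 hk1
  have hξB : ξ ∈ B2 := by
    rw [hB2def, Metric.mem_closedBall]
    have h1 : dist ξ (x n) ≤ t * ‖W n‖ := by
      rw [hξdef, dist_self_sub_left, norm_smul, Real.norm_eq_abs, abs_of_pos ht.1]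
    have h2 : dist (x n) z ≤ r1 := Metric.mem_closedBall.1 hk1
    have h3 : t * ‖W n‖ ≤ 1 := by
      have := mul_le_mul (le_of_lt ht.2) (hW1 n) (norm_nonneg _) hγ'pos.le
      nlinarith [hγ'le, hγ1]
    calc dist ξ z ≤ dist ξ (x n) + dist (x n) z := dist_triangle _ _ _
    _ ≤ t * ‖W n‖ + r1 := add_le_add h1 h2
    _ ≤ 2 := by linarith
  have hinner : ⟪W n, gradient f (x n) - gradient f ξ⟫ ≤ Mh * γ' := by
    calc ⟪W n, gradient f (x n) - gradient f ξ⟫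
        ≤ ‖W n‖ * ‖gradient f (x n) - gradient f ξ‖ := real_inner_le_norm _ _
    _ ≤ 1 * (Mh * ‖x n - ξ‖) :=
        mul_le_mul (hW1 n) (hlip _ hxB _ hξB) (norm_nonneg _) zero_le_one
    _ = Mh * (t * ‖W n‖) := by
        rw [one_mul, hξdef, sub_sub_cancel, norm_smul, Real.norm_eq_abs, abs_of_pos ht.1]
    _ ≤ Mh * γ' := by
        apply mul_le_mul_of_nonneg_left ?_ hMhnn
        have := mul_le_mul (le_of_lt ht.2) (hW1 n) (norm_nonneg _) hγ'pos.le
        nlinarith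
  have hest : f (x n - γ' • W n) - f (x n)
      ≤ -(γ' * ⟪W n, gradient f (x n)⟫) + γ' * (Mh * γ') := by
    rw [heq]
    have h4 : -⟪W n, gradient f ξ⟫
        = -⟪W n, gradient f (x n)⟫ + ⟪W n, gradient f (x n) - gradient f ξ⟫ := by
      rw [inner_sub_right]; ring
    rw [h4]
    have := mul_le_mul_of_nonneg_left hinner hγ'pos.le
    nlinarith
  have hfail2 : ¬ armijo f (x n) (W n) γ' := hfail
  have hfail' : -(γ' * ⟪W n, gradient f (x n)⟫) / 3 < f (x n - γ' • W n) - f (x n) := by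
    rw [armijo] at hfail2
    linarith [not_le.1 hfail2]
  have hwg : c3 ≤ ⟪W n, gradient f (x n)⟫ := key1 n hk1
  have h5 : γ' * (2 * ⟪W n, gradient f (x n)⟫) < γ' * (3 * (Mh * γ')) := by
    nlinarith [hfail', hest]
  have h6 : 2 * ⟪W n, gradient f (x n)⟫ < 3 * (Mh * γ') := lt_of_mul_lt_mul_left h5 hγ'pos.le
  have h7 : 9 * (Mh + 1) * γ n < 2 * c3 := by
    have h8 := mul_lt_mul_of_pos_left hγc (show (0:ℝ) < 9 * (Mh + 1) by positivity)
    have h9 : 9 * (Mh + 1) * (c3 * 2 / (9 * (Mh + 1))) = 2 * c3 := by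
      field_simp
    linarith [h9 ▸ h8]
  nlinarith [h6, h7, hwg, hγ'pos, hMhnn, hγpos n, hγ'def]



def subLim {X : Type*} [TopologicalSpace X] (y : ℕ → X) (z : X) : Prop :=
  ∃ φ : ℕ → ℕ, StrictMono φ ∧ Tendsto (y ∘ φ) atTop (𝓝 z)

lemma subLim_of_frequently {X : Type*} [PseudoMetricSpace X] {y : ℕ → X} {z : X}
    (h : ∀ ε > (0:ℝ), ∃ᶠ n in atTop, dist (y n) z < ε) : subLim y z := by
  have h2 : ∀ k : ℕ, ∃ᶠ n in atTop, dist (y n) z < 1/(k+1) := fun k => h _ (by positivity)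
  obtain ⟨φ, hφ, hp⟩ := extraction_forall_of_frequently h2
  refine ⟨φ, hφ, ?_⟩
  rw [tendsto_iff_dist_tendsto_zero]
  apply squeeze_zero (fun k => dist_nonneg) (fun k => (hp k).le)
  exact tendsto_one_div_add_atTop_nhds_zero_nat

lemma subLim_frequently {X : Type*} [TopologicalSpace X] {y : ℕ → X} {z : X}
    (h : subLim y z) {U : Set X} (hU : U ∈ 𝓝 z) : ∃ᶠ n in atTop, y n ∈ U := by
  obtain ⟨φ, hφ, hlim⟩ := h
  have hev : ∀ᶠ k in atTop, y (φ k) ∈ U := hlim hU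
  rw [frequently_atTop]
  intro N
  obtain ⟨k, hk⟩ := eventually_atTop.1 hev
  exact ⟨φ (max k N), le_trans (le_max_right k N) hφ.le_apply,
    hk (max k N) (le_max_left _ _)⟩

lemma tendsto_of_unique_subLim {X : Type*} [PseudoMetricSpace X] {y : ℕ → X} {K : Set X}
    (hK : IsCompact K) (hy : ∀ n, y n ∈ K) {t : X} (ht : ∀ z, subLim y z → z = t) :
    Tendsto y atTop (𝓝 t) := by
  rw [Metric.tendsto_atTop]
  by_contra hcon
  push_neg at hcon
  obtain ⟨ε, hε, hfr⟩ := hcon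
  have hfr' : ∃ᶠ n in atTop, ε ≤ dist (y n) t := by
    rw [frequently_atTop]
    intro N
    obtain ⟨n, hn, h⟩ := hfr N
    exact ⟨n, hn, h⟩
  obtain ⟨φ, hφ, hp⟩ := extraction_of_frequently_atTop hfr'
  obtain ⟨z, hzK, ψ, hψ, hlim⟩ := hK.tendsto_subseq (fun k => hy (φ k))
  have hz : subLim y z := ⟨φ ∘ ψ, hφ.comp hψ, hlim⟩
  have hzt : z = t := ht z hz
  have hd : Tendsto (fun k => dist (y (φ (ψ k))) t) atTop (𝓝 (dist z t)) :=
    (Continuous.dist continuous_id continuous_const).continuousAt.tendsto.comp hlim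
  have : ε ≤ dist z t := ge_of_tendsto hd (Eventually.of_forall fun k => hp (ψ k))
  rw [hzt, dist_self] at this
  linarith

lemma crossing {u : ℕ → ℝ} {r η : ℝ} (hη : 0 < η)
    (hst : ∀ᶠ n in atTop, |u (n+1) - u n| < η)
    (hlo : ∃ᶠ n in atTop, u n < r) (hhi : ∃ᶠ n in atTop, r ≤ u n) :
    ∃ᶠ n in atTop, r ≤ u n ∧ u n < r + η := by
  rw [frequently_atTop]
  intro N
  obtain ⟨N0, hN0⟩ := eventually_atTop.1 hst
  obtain ⟨n, hn, hun⟩ := frequently_atTop.1 hlo (max N N0)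
  obtain ⟨n', hn', hun'⟩ := frequently_atTop.1 hhi (n+1)
  have hex : ∃ i, r ≤ u (n + 1 + i) := ⟨n' - (n+1), by
    have : n + 1 + (n' - (n+1)) = n' := by omega
    rwa [this]⟩
  have hnN : N ≤ n := le_trans (le_max_left _ _) hn
  have hnN0 : N0 ≤ n := le_trans (le_max_right _ _) hn
  refine ⟨n + 1 + Nat.find hex, by omega, Nat.find_spec hex, ?_⟩
  rcases Nat.eq_zero_or_pos (Nat.find hex) with hk0 | hkpos
  · rw [hk0]
    have := hN0 n hnN0
    have h2 : u (n + 1) - u n < η := lt_of_le_of_lt (le_abs_self _) this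
    simp only [Nat.add_zero]
    linarith
  · have hmin : ¬ r ≤ u (n + 1 + (Nat.find hex - 1)) := Nat.find_min hex (by omega)
    push_neg at hmin
    have hinc := hN0 (n + 1 + (Nat.find hex - 1)) (by omega)
    have h2 : u (n + 1 + (Nat.find hex - 1) + 1) - u (n + 1 + (Nat.find hex - 1)) < η :=
      lt_of_le_of_lt (le_abs_self _) hinc
    have h3 : n + 1 + Nat.find hex = n + 1 + (Nat.find hex - 1) + 1 := by omega
    rw [h3]
    linarith

lemma subLim_two_points {X : Type*} [MetricSpace X] {y : ℕ → X} {K : Set X}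
    (hK : IsCompact K) (hy : ∀ n, y n ∈ K)
    (hstep : Tendsto (fun n => dist (y (n+1)) (y n)) atTop (𝓝 0))
    {a b : X} (ha : subLim y a) (hb : subLim y b) (hab : a ≠ b)
    (hcnt : {z : X | subLim y z}.Countable) : False := by
  have hd : 0 < dist b a := dist_pos.2 (fun h => hab h.symm)
  set d := dist b a with hddef
  have key : ∀ r, r ∈ Set.Ioo (0:ℝ) d → ∃ z : X, subLim y z ∧ dist z a = r := by
    intro r hr
    have hfreq : ∀ k : ℕ, ∃ᶠ n in atTop, r ≤ dist (y n) a ∧ dist (y n) a < r + 1/(k+1) := by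
      intro k
      have hη : (0:ℝ) < 1/(k+1) := by positivity
      apply crossing hη
      · have := hstep.eventually_lt_const hη
        filter_upwards [this] with n hn
        calc |dist (y (n+1)) a - dist (y n) a| ≤ dist (y (n+1)) (y n) := abs_dist_sub_le _ _ _
        _ < 1/(k+1) := hn
      · have := subLim_frequently ha (Metric.ball_mem_nhds a hr.1)
        apply this.mono
        intro n hn
        rwa [Metric.mem_ball] at hn
      · have hdr : (0:ℝ) < d - r := by linarith [hr.2]
        have := subLim_frequently hb (Metric.ball_mem_nhds b hdr)
        apply this.mono
        intro n hn
        rw [Metric.mem_ball] at hn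
        have := abs_dist_sub_le b (y n) a
        have h2 : dist b a - dist (y n) a ≤ dist b (y n) := by
          have := le_abs_self (dist b a - dist (y n) a)
          linarith [this.trans (abs_dist_sub_le b (y n) a)]
        rw [dist_comm b (y n)] at h2
        linarith
    obtain ⟨φ, hφ, hp⟩ := extraction_forall_of_frequently hfreq
    obtain ⟨z, hzK, ψ, hψ, hlim⟩ := hK.tendsto_subseq (fun k => hy (φ k))
    refine ⟨z, ⟨φ ∘ ψ, hφ.comp hψ, hlim⟩, ?_⟩
    have hda : Tendsto (fun k => dist (y (φ (ψ k))) a) atTop (𝓝 (dist z a)) :=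
      (Continuous.dist continuous_id continuous_const).continuousAt.tendsto.comp hlim
    have hda' : Tendsto (fun k => dist (y (φ (ψ k))) a) atTop (𝓝 r) := by
      rw [show (r:ℝ) = r + 0 by ring]
      apply tendsto_of_tendsto_of_tendsto_of_le_of_le (g := fun _ => r + 0)
        (h := fun k => r + 1/(ψ k + 1))
      · exact tendsto_const_nhds
      · apply Tendsto.const_add
        apply squeeze_zero (fun k => by positivity) (fun k => ?_)
          tendsto_one_div_add_atTop_nhds_zero_nat
        have hkp : k ≤ ψ k := hψ.le_apply
        have : (k:ℝ) + 1 ≤ (ψ k : ℝ) + 1 := by exact_mod_cast by omega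
        apply div_le_div_of_nonneg_left (by norm_num) (by positivity) this
      · intro k; simpa using (hp (ψ k)).1
      · intro k; exact (hp (ψ k)).2.le
    exact tendsto_nhds_unique hda hda'
  have hsub : Set.Ioo (0:ℝ) d ⊆ (fun z : X => dist z a) '' {z : X | subLim y z} := by
    intro r hr
    obtain ⟨z, hz, hdz⟩ := key r hr
    exact ⟨z, hz, hdz⟩
  have hcnt2 : (Set.Ioo (0:ℝ) d).Countable := (hcnt.image _).mono hsub
  have h3 := hcnt2.le_aleph0
  rw [Cardinal.mk_Ioo_real hd] at h3
  exact absurd h3 (not_le.2 Cardinal.aleph0_lt_continuum)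

variable {E : Type*} [NormedAddCommGroup E] [NormedSpace ℝ E]

def sphMap (u : E) : E × ℝ :=
  ((2 / (1 + ‖u‖^2)) • u, (‖u‖^2 - 1) / (‖u‖^2 + 1))

def north (E : Type*) [NormedAddCommGroup E] [NormedSpace ℝ E] : E × ℝ := (0, 1)

lemma one_add_sq_pos (u : E) : (0:ℝ) < 1 + ‖u‖^2 := by positivity

lemma sph_cont : Continuous (sphMap (E := E)) := by
  apply Continuous.prodMk
  · exact (continuous_const.div (by fun_prop) (fun u => (one_add_sq_pos u).ne')).smul
      continuous_id
  · apply Continuous.div (by fun_prop) (by fun_prop)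
    intro u
    have := one_add_sq_pos u
    intro h; nlinarith [h]

lemma sph_norm_le_one (u : E) : ‖sphMap u‖ ≤ 1 := by
  rw [sphMap, Prod.norm_def]
  apply max_le
  · rw [norm_smul, Real.norm_eq_abs, abs_of_pos (by positivity : (0:ℝ) < 2 / (1 + ‖u‖^2))]
    rw [div_mul_eq_mul_div, div_le_one (one_add_sq_pos u)]
    nlinarith [sq_nonneg (‖u‖ - 1)]
  · rw [Real.norm_eq_abs, abs_div, abs_of_pos (by positivity : (0:ℝ) < ‖u‖^2 + 1),
      div_le_one (by positivity : (0:ℝ) < ‖u‖^2 + 1)]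
    rw [abs_le]
    constructor <;> nlinarith [sq_nonneg ‖u‖]

lemma sph_mem_ball (u : E) : sphMap u ∈ Metric.closedBall (0 : E × ℝ) 1 := by
  rw [Metric.mem_closedBall, dist_zero_right]
  exact sph_norm_le_one u

lemma sph_snd_dist (u : E) : dist ((sphMap u).2) 1 = 2 / (‖u‖^2 + 1) := by
  rw [sphMap, Real.dist_eq]
  have h1 : (0:ℝ) < ‖u‖^2 + 1 := by positivity
  have key : (‖u‖^2 - 1)/(‖u‖^2 + 1) - 1 = -(2/(‖u‖^2 + 1)) := by
    field_simp
    ring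
  rw [key, abs_neg, abs_of_pos (by positivity)]

lemma sph_dist_north_ge (u : E) : 2 / (‖u‖^2 + 1) ≤ dist (sphMap u) (north E) := by
  rw [north, Prod.dist_eq]
  rw [← sph_snd_dist u]
  exact le_max_right _ _

lemma sph_ne_north (u : E) : sphMap u ≠ north E := by
  intro h
  have h2 := sph_dist_north_ge u
  rw [h, dist_self] at h2
  have : (0:ℝ) < 2 / (‖u‖^2 + 1) := by positivity
  linarith

lemma sph_dist_north_le (u : E) (hu : 1 ≤ ‖u‖) : dist (sphMap u) (north E) ≤ 2 / ‖u‖ := by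
  have h0 : (0:ℝ) < ‖u‖ := lt_of_lt_of_le one_pos hu
  have h1 : (0:ℝ) < ‖u‖^2 + 1 := by positivity
  rw [north, Prod.dist_eq]
  apply max_le
  · rw [sphMap]
    simp only
    rw [dist_zero_right, norm_smul, Real.norm_eq_abs,
      abs_of_pos (by positivity : (0:ℝ) < 2 / (1 + ‖u‖^2))]
    rw [div_mul_eq_mul_div, div_le_div_iff₀ (by positivity) h0]
    nlinarith
  · rw [sph_snd_dist u, div_le_div_iff₀ h1 h0]
    nlinarith

lemma sph_inj : Function.Injective (sphMap (E := E)) := by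
  intro u v h
  rw [sphMap, sphMap, Prod.mk.injEq] at h
  obtain ⟨h1, h2⟩ := h
  have hu1 : (0:ℝ) < ‖u‖^2 + 1 := by positivity
  have hv1 : (0:ℝ) < ‖v‖^2 + 1 := by positivity
  have hn : ‖u‖^2 = ‖v‖^2 := by
    rw [div_eq_div_iff hu1.ne' hv1.ne'] at h2
    nlinarith
  rw [hn] at h1
  have h3 : (0:ℝ) < 2 / (1 + ‖v‖^2) := by positivity
  exact smul_right_injective E h3.ne' h1

lemma sph_norm_bound {u : E} {d0 : ℝ} (hd0 : 0 < d0)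
    (h : d0 ≤ dist (sphMap u) (north E)) : ‖u‖ ≤ max 1 (2 / d0) := by
  by_contra hcon
  push_neg at hcon
  have h1 : 1 ≤ ‖u‖ := le_of_lt (lt_of_le_of_lt (le_max_left _ _) hcon)
  have h2 := sph_dist_north_le u h1
  have h3 : 2 / d0 < ‖u‖ := lt_of_le_of_lt (le_max_right _ _) hcon
  have h4 : 2 / ‖u‖ < d0 := by
    rw [div_lt_iff₀ (by linarith : (0:ℝ) < ‖u‖)]
    rw [div_lt_iff₀ hd0] at h3
    nlinarith
  linarith


lemma steps_small {m : ℕ} {f : Euc m → ℝ} {δ : Fin (m+1) → ℝ} {τ γ0 : ℝ}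
    {e : ℕ → Fin m → Euc m} {j : ℕ → Fin (m+1)} {x : ℕ → Euc m} {γ : ℕ → ℝ}
    (hm : 1 ≤ m) (hδ : Function.Injective δ) (hτ : 0 < τ) (hτ1 : τ < 1)
    (hγ0 : 0 < γ0) (hγ1 : γ0 < 1) (hf : ContDiff ℝ 3 f)
    (hseq : IsQNGSeq δ τ γ0 f e j x) (hg : ∀ n, gradient f (x n) ≠ 0)
    (hγle : ∀ n, γ n ≤ γ0) (hγpos : ∀ n, 0 < γ n)
    (hxeq : ∀ n, x (n+1) = x n - γ n • hatW f (Aop f (δ (j n)) τ (x n)) (e n) (x n))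
    (R c : ℝ) (hc : 0 < c) :
    ∀ᶠ n in atTop, ‖x n‖ ≤ R → dist (x (n+1)) (x n) ≤ c := by
  by_contra hcon
  rw [Filter.not_eventually] at hcon
  have hcon' : ∃ᶠ n in atTop, ‖x n‖ ≤ R ∧ c < dist (x (n+1)) (x n) := by
    apply hcon.mono
    intro n hn
    push_neg at hn
    exact hn
  obtain ⟨φ, hφ, hp⟩ := extraction_of_frequently_atTop hcon'
  have hκ : 0 < kappa δ := kappa_pos hm hδ
  -- lower bound on gradient norm along φ
  set c' : ℝ := (c * kappa δ / γ0) ^ (1 - τ)⁻¹ with hc'def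
  have hc'pos : 0 < c' := by
    apply Real.rpow_pos_of_pos
    positivity
  have hglb : ∀ k, c' ≤ ‖gradient f (x (φ k))‖ := by
    intro k
    set n := φ k with hndef
    have hgood : goodIdx δ τ f (x n) (j n) := ((hseq n).2.2 (hg n)).1
    have hon := (hseq n).1
    have hd : dist (x (n+1)) (x n) ≤ γ0 * (‖gradient f (x n)‖ ^ (1-τ) / kappa δ) := by
      rw [hxeq n, dist_self_sub_left, norm_smul, Real.norm_eq_abs,
        abs_of_pos (hγpos n)]
      have h1 := (norm_hatW_le_norm_w (f := f) (A := Aop f (δ (j n)) τ (x n))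
        (e := e n) (x := x n)).trans (norm_w_le' hm hδ hon hgood (hg n))
      exact mul_le_mul (hγle n) h1 (norm_nonneg _) hγ0.le
    have h2 : c < γ0 * (‖gradient f (x n)‖ ^ (1-τ) / kappa δ) :=
      lt_of_lt_of_le (hp k).2 hd
    have h3 : c * kappa δ / γ0 ≤ ‖gradient f (x n)‖ ^ (1-τ) := by
      have h2' : c * kappa δ < γ0 * ‖gradient f (x n)‖ ^ (1-τ) := by
        rw [mul_div_assoc'] at h2
        exact (lt_div_iff₀ hκ).1 h2
      rw [div_le_iff₀ hγ0]
      nlinarith [h2']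
    exact rpow_inv_ge (norm_nonneg _) (by positivity) (by linarith) h3
  -- compactness
  have hmem : ∀ k, x (φ k) ∈ Metric.closedBall (0 : Euc m) R := by
    intro k
    rw [Metric.mem_closedBall, dist_zero_right]
    exact (hp k).1
  obtain ⟨z, hzK, ψ, hψ, hlim⟩ := (isCompact_closedBall (0 : Euc m) R).tendsto_subseq hmem
  have hcrit : gradient f z = 0 :=
    cluster_critical hm hδ hτ hτ1 hγ0 hγ1 hf hseq hg (hφ.comp hψ) hlim
  have hnz : c' ≤ ‖gradient f z‖ := by
    have hcont : Tendsto (fun k => ‖gradient f (x (φ (ψ k)))‖) atTop (𝓝 ‖gradient f z‖) :=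
      ((cont_grad hf).norm.tendsto z).comp hlim
    exact ge_of_tendsto hcont (Eventually.of_forall fun k => hglb (ψ k))
  rw [hcrit] at hnz
  simp at hnz
  linarith

end Aux


/-- If `0 < τ < 1` and `f` has at most countably many critical points, then either
`‖x_n‖ → ∞` or `{x_n}` converges to a critical point of `f`; moreover, if `f` has
compact sublevels, then `{x_n}` converges to a critical point of `f`. -/
theorem stmt4 {m : ℕ} (hm : 1 ≤ m) (δ : Fin (m + 1) → ℝ) (hδ : Function.Injective δ)
    (τ γ0 : ℝ) (hτ : 0 < τ) (hτ1 : τ < 1) (hγ0 : 0 < γ0) (hγ1 : γ0 < 1)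
    (f : Euc m → ℝ) (hf : ContDiff ℝ 3 f)
    (hcount : {y : Euc m | gradient f y = 0}.Countable)
    (e : ℕ → Fin m → Euc m) (j : ℕ → Fin (m + 1)) (x : ℕ → Euc m)
    (hseq : IsQNGSeq δ τ γ0 f e j x) :
    (Tendsto (fun n => ‖x n‖) atTop atTop ∨
      ∃ xinf : Euc m, gradient f xinf = 0 ∧ Tendsto x atTop (𝓝 xinf)) ∧
    ((∀ a : ℝ, IsCompact {y : Euc m | f y ≤ a}) →
      ∃ xinf : Euc m, gradient f xinf = 0 ∧ Tendsto x atTop (𝓝 xinf)) := by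
  classical
  by_cases hcase : ∃ N, gradient f (x N) = 0
  · obtain ⟨N, hN⟩ := hcase
    have hconst : ∀ k, x (N + k) = x N := by
      intro k
      induction k with
      | zero => rfl
      | succ k ih =>
        have hgN : gradient f (x (N + k)) = 0 := by rw [ih]; exact hN
        have h1 : x (N + k + 1) = x (N + k) := (hseq (N + k)).2.1 hgN
        have h2 : N + (k + 1) = N + k + 1 := rfl
        rw [h2, h1, ih]
    have hx : Tendsto x atTop (𝓝 (x N)) := by
      apply tendsto_atTop_of_eventually_const (i₀ := N)
      intro i hi
      have h1 : x (N + (i - N)) = x N := hconst (i - N)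
      rwa [show N + (i - N) = i by omega] at h1
    exact ⟨Or.inr ⟨x N, hN, hx⟩, fun _ => ⟨x N, hN, hx⟩⟩
  push_neg at hcase
  have hg : ∀ n, gradient f (x n) ≠ 0 := hcase
  have hstep := fun n => step_spec (f := f) hγ0 (hseq n).2 (hg n)
  choose γ hγpos hγle hxeq harm hor using hstep
  -- f is nonincreasing along the sequence
  have hfd' : ∀ n, f (x (n + 1)) ≤ f (x n) := by
    intro n
    have h1 := harm n
    rw [armijo] at h1
    have h2 : 0 ≤ ⟪hatW f (Aop f (δ (j n)) τ (x n)) (e n) (x n), gradient f (x n)⟫ :=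
      inner_hatw_nonneg (fun i => norm_nonneg _)
    rw [hxeq n]
    nlinarith [mul_nonneg (hγpos n).le h2]
  have hant : Antitone (fun n => f (x n)) := antitone_nat_of_succ_le hfd'
  -- bounded steps
  have hstepb : ∀ n, dist (x (n + 1)) (x n) ≤ γ0 := by
    intro n
    rw [hxeq n, dist_self_sub_left, norm_smul, Real.norm_eq_abs, abs_of_pos (hγpos n)]
    calc γ n * ‖hatW f (Aop f (δ (j n)) τ (x n)) (e n) (x n)‖ ≤ γ0 * 1 :=
      mul_le_mul (hγle n) norm_hatW_le_one (norm_nonneg _) hγ0.le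
    _ = γ0 := mul_one _
  have hss := steps_small hm hδ hτ hτ1 hγ0 hγ1 hf hseq hg hγle hγpos hxeq
  have main : Tendsto (fun n => ‖x n‖) atTop atTop ∨
      ∃ xinf : Euc m, gradient f xinf = 0 ∧ Tendsto x atTop (𝓝 xinf) := by
    by_cases hT : Tendsto (fun n => ‖x n‖) atTop atTop
    · exact Or.inl hT
    right
    haveI : ProperSpace (Euc m × ℝ) := by infer_instance
    set y : ℕ → Euc m × ℝ := fun n => sphMap (x n) with hydef
    have hyK : ∀ n, y n ∈ Metric.closedBall (0 : Euc m × ℝ) 1 := fun n => sph_mem_ball _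
    have hKc : IsCompact (Metric.closedBall (0 : Euc m × ℝ) 1) := isCompact_closedBall _ _
    -- the spherical steps tend to zero
    have hystep : Tendsto (fun n => dist (y (n + 1)) (y n)) atTop (𝓝 0) := by
      rw [Metric.tendsto_atTop]
      intro ε hε
      set R1 : ℝ := max 1 (8 / ε) with hR1def
      have hR1pos : (0:ℝ) < R1 := lt_of_lt_of_le one_pos (le_max_left _ _)
      set R0 : ℝ := R1 + γ0 + 1 with hR0def
      have hK2 : IsCompact (Metric.closedBall (0 : Euc m) (R0 + γ0)) :=
        isCompact_closedBall _ _
      have huc : UniformContinuousOn sphMap (Metric.closedBall (0 : Euc m) (R0 + γ0)) :=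
        hK2.uniformContinuousOn_of_continuous sph_cont.continuousOn
      rw [Metric.uniformContinuousOn_iff] at huc
      obtain ⟨δδ, hδδ, hucd⟩ := huc (ε / 2) (by positivity)
      obtain ⟨N1, hN1⟩ := eventually_atTop.1 (hss R0 (δδ / 2) (by positivity))
      refine ⟨N1, fun n hn => ?_⟩
      rw [dist_zero_right, Real.norm_eq_abs, abs_of_nonneg dist_nonneg]
      by_cases hc2 : ‖x n‖ ≤ R0
      · have hstepn := hN1 n hn hc2
        have hx1 : x n ∈ Metric.closedBall (0 : Euc m) (R0 + γ0) := by
          rw [Metric.mem_closedBall, dist_zero_right]; linarith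
        have hx2 : x (n + 1) ∈ Metric.closedBall (0 : Euc m) (R0 + γ0) := by
          rw [Metric.mem_closedBall, dist_zero_right]
          have h3 : ‖x (n + 1)‖ - ‖x n‖ ≤ ‖x (n + 1) - x n‖ := norm_sub_norm_le _ _
          have h4 : ‖x (n + 1) - x n‖ = dist (x (n + 1)) (x n) := (dist_eq_norm _ _).symm
          linarith [hstepb n]
        have h5 := hucd (x (n + 1)) hx2 (x n) hx1 (lt_of_le_of_lt hstepn (by linarith))
        calc dist (y (n + 1)) (y n) < ε / 2 := h5
        _ < ε := by linarith
      · push_neg at hc2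
        have hxn1 : R1 ≤ ‖x n‖ := by linarith
        have hxn2 : R1 ≤ ‖x (n + 1)‖ := by
          have h3 : ‖x n‖ - ‖x (n + 1)‖ ≤ ‖x n - x (n + 1)‖ := norm_sub_norm_le _ _
          have h4 : ‖x n - x (n + 1)‖ = dist (x (n + 1)) (x n) := by
            rw [dist_eq_norm, norm_sub_rev]
          linarith [hstepb n]
        have h8ε : 8 / ε ≤ R1 := le_max_right _ _
        have hquarter : ∀ u : Euc m, R1 ≤ ‖u‖ → dist (sphMap u) (north (Euc m)) ≤ ε / 4 := by
          intro u hu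
          have h1le : (1:ℝ) ≤ ‖u‖ := le_trans (le_max_left _ _) hu
          refine (sph_dist_north_le u h1le).trans ?_
          have hupos : (0:ℝ) < ‖u‖ := by linarith
          rw [div_le_iff₀ hupos]
          have : 8 / ε ≤ ‖u‖ := le_trans h8ε hu
          rw [div_le_iff₀ hε] at this
          nlinarith
        have hd1 := hquarter (x n) hxn1
        have hd2 := hquarter (x (n + 1)) hxn2
        calc dist (y (n + 1)) (y n)
            ≤ dist (y (n + 1)) (north (Euc m)) + dist (north (Euc m)) (y n) :=
              dist_triangle _ _ _
        _ = dist (y (n + 1)) (north (Euc m)) + dist (y n) (north (Euc m)) := by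
            rw [dist_comm (north (Euc m)) (y n)]
        _ ≤ ε / 4 + ε / 4 := add_le_add hd2 hd1
        _ < ε := by linarith
    -- cluster points of y
    have hTsub : {z : Euc m × ℝ | subLim y z} ⊆
        (sphMap '' {p : Euc m | gradient f p = 0}) ∪ {north (Euc m)} := by
      intro z hz
      by_cases hzN : z = north (Euc m)
      · right; simp [hzN]
      left
      have hd0 : 0 < dist z (north (Euc m)) := dist_pos.2 hzN
      obtain ⟨φ, hφ, hylim⟩ := hz
      have hdist : Tendsto (fun k => dist (y (φ k)) (north (Euc m))) atTop
          (𝓝 (dist z (north (Euc m)))) :=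
        (Continuous.dist continuous_id continuous_const).continuousAt.tendsto.comp hylim
      have hev : ∀ᶠ k in atTop, dist z (north (Euc m)) / 2 ≤ dist (y (φ k)) (north (Euc m)) :=
        hdist.eventually (eventually_ge_nhds (by linarith))
      obtain ⟨N, hN⟩ := eventually_atTop.1 hev
      set Rz : ℝ := max 1 (2 / (dist z (north (Euc m)) / 2)) with hRzdef
      have hmem : ∀ k, x (φ (N + k)) ∈ Metric.closedBall (0 : Euc m) Rz := by
        intro k
        rw [Metric.mem_closedBall, dist_zero_right]
        exact sph_norm_bound (by positivity) (hN (N + k) (by omega))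
      have hχ : StrictMono (fun k => φ (N + k)) :=
        fun a b h => hφ (Nat.add_lt_add_left h N)
      obtain ⟨p, hpK, ψ, hψ, hplim⟩ := (isCompact_closedBall (0 : Euc m) Rz).tendsto_subseq hmem
      have hχψ : StrictMono fun k => φ (N + ψ k) := fun a b h => hφ (Nat.add_lt_add_left (hψ h) N)
      have hpz : gradient f p = 0 :=
        cluster_critical hm hδ hτ hτ1 hγ0 hγ1 hf hseq hg hχψ hplim
      have hsp : Tendsto (fun k => y (φ (N + ψ k))) atTop (𝓝 (sphMap p)) :=
        (sph_cont.tendsto p).comp hplim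
      have hsp2 : Tendsto (fun k => y (φ (N + ψ k))) atTop (𝓝 z) := by
        have htd : Tendsto (fun k => N + ψ k) atTop atTop :=
          StrictMono.tendsto_atTop
            (show StrictMono fun k => N + ψ k from fun a b h => Nat.add_lt_add_left (hψ h) N)
        exact hylim.comp htd
      exact ⟨p, hpz, tendsto_nhds_unique hsp hsp2⟩
    have hTcnt : {z : Euc m × ℝ | subLim y z}.Countable :=
      Set.Countable.mono hTsub ((hcount.image _).union (Set.countable_singleton _))
    obtain ⟨z0, hz0K, φ0, hφ0, hy0⟩ := hKc.tendsto_subseq hyK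
    have hz0 : subLim y z0 := ⟨φ0, hφ0, hy0⟩
    have huniq : ∀ z, subLim y z → z = z0 := by
      intro z hz
      by_contra hne
      exact subLim_two_points hKc hyK hystep hz hz0 hne hTcnt
    have hyconv : Tendsto y atTop (𝓝 z0) := tendsto_of_unique_subLim hKc hyK huniq
    have hz0ne : z0 ≠ north (Euc m) := by
      intro h
      apply hT
      rw [h] at hyconv
      rw [tendsto_atTop]
      intro b
      set b' : ℝ := max b 1 with hb'def
      have hb'pos : (0:ℝ) < b' := lt_of_lt_of_le one_pos (le_max_right _ _)
      have hεb : (0:ℝ) < 2 / (1 + b' ^ 2) := by positivity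
      have hevb := Metric.tendsto_atTop.1 hyconv _ hεb
      obtain ⟨N, hN⟩ := hevb
      rw [eventually_atTop]
      refine ⟨N, fun n hn => ?_⟩
      have h1 := hN n hn
      have h2 := sph_dist_north_ge (x n)
      have h3 : 2 / (‖x n‖ ^ 2 + 1) < 2 / (1 + b' ^ 2) := lt_of_le_of_lt h2 h1
      have h4 : 1 + b' ^ 2 < ‖x n‖ ^ 2 + 1 := by
        have ha : (0:ℝ) < ‖x n‖ ^ 2 + 1 := by positivity
        have hbb : (0:ℝ) < 1 + b' ^ 2 := by positivity
        rw [div_lt_div_iff₀ ha hbb] at h3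
        nlinarith
      have h5 : b' ≤ ‖x n‖ := by nlinarith [norm_nonneg (x n), hb'pos]
      exact le_trans (le_max_left _ _) h5
    obtain ⟨xinf, hxinf, hsph⟩ : ∃ p : Euc m, gradient f p = 0 ∧ sphMap p = z0 := by
      rcases hTsub hz0 with h | h
      · obtain ⟨p, hp, hps⟩ := h
        exact ⟨p, hp, hps⟩
      · exact absurd h hz0ne
    refine ⟨xinf, hxinf, ?_⟩
    have hd0 : 0 < dist z0 (north (Euc m)) := dist_pos.2 hz0ne
    have hdist : Tendsto (fun n => dist (y n) (north (Euc m))) atTop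
        (𝓝 (dist z0 (north (Euc m)))) :=
      (Continuous.dist continuous_id continuous_const).continuousAt.tendsto.comp hyconv
    have hevb : ∀ᶠ n in atTop, dist z0 (north (Euc m)) / 2 ≤ dist (y n) (north (Euc m)) :=
      hdist.eventually (eventually_ge_nhds (by linarith))
    obtain ⟨N, hN⟩ := eventually_atTop.1 hevb
    set Rz : ℝ := max 1 (2 / (dist z0 (north (Euc m)) / 2)) with hRzdef
    have hmem : ∀ k, x (N + k) ∈ Metric.closedBall (0 : Euc m) Rz := by
      intro k
      rw [Metric.mem_closedBall, dist_zero_right]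
      exact sph_norm_bound (by positivity) (hN (N + k) (by omega))
    have hshift : Tendsto (fun k => x (N + k)) atTop (𝓝 xinf) := by
      apply tendsto_of_unique_subLim (isCompact_closedBall (0 : Euc m) Rz) hmem
      intro p hp
      obtain ⟨ψ, hψ, hplim⟩ := hp
      have hχ : StrictMono fun k => N + ψ k := fun a b h => Nat.add_lt_add_left (hψ h) N
      have hyp : subLim y (sphMap p) :=
        ⟨fun k => N + ψ k, hχ, (sph_cont.tendsto p).comp hplim⟩
      have h1 : sphMap p = z0 := huniq _ hyp
      exact sph_inj (h1.trans hsph.symm)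
    have h2 : Tendsto (fun k => x (k + N)) atTop (𝓝 xinf) := by
      apply hshift.congr
      intro k
      rw [Nat.add_comm]
    exact (tendsto_add_atTop_iff_nat N).1 h2
  refine ⟨main, fun hcomp => ?_⟩
  rcases main with hT | hconv
  · exfalso
    have hfx : ∀ n, f (x n) ≤ f (x 0) := fun n => hant (Nat.zero_le n)
    have hxK : ∀ n, x n ∈ {y : Euc m | f y ≤ f (x 0)} := fun n => hfx n
    obtain ⟨R, hR⟩ := (hcomp (f (x 0))).isBounded.subset_closedBall 0
    have hbnd : ∀ n, ‖x n‖ ≤ R := by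
      intro n
      have := hR (hxK n)
      rwa [Metric.mem_closedBall, dist_zero_right] at this
    obtain ⟨N, hN⟩ := eventually_atTop.1 (hT.eventually (eventually_ge_atTop (R + 1)))
    linarith [hN N le_rfl, hbnd N]
  · exact hconv
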